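/- arXiv:1105.1824 — 8 statements merged into one kernel-verified Lean document; each statement's English description precedes it below -/
import Mathlib

section
/- In a B-hedonic game in which every player likes at least one other player (i.e., for each i there exists j ≠ i with j ≻ᵢ i), the partition consisting of the grand coalition N is Nash stable. -/
open Finset

/-- A partition of the player set into coalitions: `part i` is the coalition
containing player `i`. -/
structure HPartition (N : Type*) where
  part : N → Finset N
  mem_self : ∀ i, i ∈ part i
  eq_of_mem : ∀ i j : N, j ∈ part i → part j = part i

section Defs

variable {N : Type*} [DecidableEq N]

/-- Strict part of a weak preference over coalitions. -/
def SPref (pref : N → Finset N → Finset N → Prop) (i : N) (S T : Finset N) : Prop :=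
  pref i S T ∧ ¬ pref i T S

/-- `S` is an (existing or empty) coalition of the partition `π`. -/
def IsCoalitionOf (π : HPartition N) (S : Finset N) : Prop :=
  S = ∅ ∨ ∃ j, S = π.part j

/-- Nash stability: no player strictly prefers joining another existing
(possibly empty) coalition. -/
def NashStable (pref : N → Finset N → Finset N → Prop) (π : HPartition N) : Prop :=
  ∀ i S, IsCoalitionOf π S → S ≠ π.part i →
    ¬ SPref pref i (insert i S) (π.part i)

/-- Individual stability: no strictly improving move that all members of the
joined coalition weakly approve. -/
def IndStable (pref : N → Finset N → Finset N → Prop) (π : HPartition N) : Prop :=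
  ∀ i S, IsCoalitionOf π S → S ≠ π.part i →
    ¬ (SPref pref i (insert i S) (π.part i) ∧ ∀ j ∈ S, pref j (insert i S) S)

/-- Contractual individual stability: no strictly improving move approved by the
joined coalition and by the abandoned coalition. -/
def ContIndStable (pref : N → Finset N → Finset N → Prop) (π : HPartition N) : Prop :=
  ∀ i S, IsCoalitionOf π S → S ≠ π.part i →
    ¬ (SPref pref i (insert i S) (π.part i) ∧ (∀ j ∈ S, pref j (insert i S) S) ∧
        (∀ j ∈ π.part i, j ≠ i → pref j ((π.part i).erase i) (π.part i)))

/-- Individual rationality: everyone weakly prefers his coalition to being alone. -/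
def IndRational (pref : N → Finset N → Finset N → Prop) (π : HPartition N) : Prop :=
  ∀ i, pref i (π.part i) {i}

/-- A CIS deviation from `π` to `π'`: player `i` moves to the (possibly empty)
existing coalition `T`, strictly improving, while no member of `T` nor of the
abandoned coalition is worse off. -/
def CISDeviation (pref : N → Finset N → Finset N → Prop) (π π' : HPartition N) : Prop :=
  ∃ i T, IsCoalitionOf π T ∧ T ≠ π.part i ∧ i ∉ T ∧
    SPref pref i (insert i T) (π.part i) ∧
    (∀ j ∈ T, pref j (insert i T) T) ∧
    (∀ j ∈ π.part i, j ≠ i → pref j ((π.part i).erase i) (π.part i)) ∧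
    (∀ k, π'.part k = if k = i ∨ k ∈ T then insert i T else (π.part k).erase i)

/-- The weak relation associated with a (primitive) strict relation. -/
def weakOf (sp : N → Finset N → Finset N → Prop) (i : N) (S T : Finset N) : Prop :=
  ¬ sp i T S

/-- Strict part of a weak preference over players. -/
def strictP (p : N → N → N → Prop) (i j k : N) : Prop := p i j k ∧ ¬ p i k j

/-- Player `j` is unacceptable to `i`: `i ≻ᵢ j`. -/
def unacc (p : N → N → N → Prop) (i j : N) : Prop := strictP p i i j

/-- Player `i` likes `j`: `j ≻ᵢ i`. -/
def likes (p : N → N → N → Prop) (i j : N) : Prop := strictP p i j i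

/-- Each player's preference over players is a complete preorder. -/
def CompletePreorder (p : N → N → N → Prop) : Prop :=
  (∀ i j k, p i j k ∨ p i k j) ∧ (∀ i a b c, p i a b → p i b c → p i a c)

/-- The set of `≿ᵢ`-maximal elements of `J`, with `max ∅ = {i}`. -/
def maxSet (p : N → N → N → Prop) (i : N) (J : Finset N) : Set N :=
  if J = ∅ then {i} else {m | m ∈ J ∧ ∀ j ∈ J, p i m j}

/-- The set of `≿ᵢ`-minimal elements of `J`, with `min ∅ = {i}`. -/
def minSet (p : N → N → N → Prop) (i : N) (J : Finset N) : Set N :=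
  if J = ∅ then {i} else {m | m ∈ J ∧ ∀ j ∈ J, p i j m}

/-- W-hedonic (weak) preference over coalitions: compare worst members. -/
def WPref (p : N → N → N → Prop) (i : N) (S T : Finset N) : Prop :=
  ∀ s ∈ minSet p i (S.erase i), ∀ t ∈ minSet p i (T.erase i), p i s t

/-- WW-hedonic (weak) preference over coalitions. -/
def WWPref (p : N → N → N → Prop) (i : N) (S T : Finset N) : Prop :=
  (∃ j ∈ T.erase i, unacc p i j) ∨ WPref p i S T

/-- BB-hedonic (weak) preference over coalitions. -/
def BBPref (p : N → N → N → Prop) (i : N) (S T : Finset N) : Prop :=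
  (∃ j ∈ T.erase i, unacc p i j) ∨
    ((∀ j ∈ S.erase i, ¬ unacc p i j) ∧ (∀ j ∈ T.erase i, ¬ unacc p i j) ∧
      ∀ s ∈ maxSet p i (S.erase i), ∀ t ∈ maxSet p i (T.erase i), p i s t)

/-- B-hedonic strict preference over coalitions: better best member, or
indifferent best members and smaller size. -/
def BStrict (p : N → N → N → Prop) (i : N) (S T : Finset N) : Prop :=
  (∀ s ∈ maxSet p i (S.erase i), ∀ t ∈ maxSet p i (T.erase i), strictP p i s t) ∨
    ((∀ s ∈ maxSet p i (S.erase i), ∀ t ∈ maxSet p i (T.erase i), p i s t ∧ p i t s) ∧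
      S.card < T.card)

/-- B-hedonic weak preference over coalitions. -/
def BWeak (p : N → N → N → Prop) : N → Finset N → Finset N → Prop :=
  weakOf (BStrict p)

end Defs


lemma exists_max_of_cp {N : Type*} [DecidableEq N] (p : N → N → N → Prop)
    (hp : CompletePreorder p) (i : N) (J : Finset N) (hJ : J.Nonempty) :
    ∃ m ∈ J, ∀ j ∈ J, p i m j := by
  classical
  induction J using Finset.induction_on with
  | empty => exact absurd hJ (by simp)
  | @insert a J ha ih =>
    by_cases hb : J.Nonempty
    · obtain ⟨m, hm, hmax⟩ := ih hb
      rcases hp.1 i a m with h | h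
      · refine ⟨a, Finset.mem_insert_self _ _, ?_⟩
        intro j hj
        rcases Finset.mem_insert.mp hj with rfl | hj
        · rcases hp.1 i j j with h' | h' <;> exact h'
        · exact hp.2 i a m j h (hmax j hj)
      · exact ⟨m, Finset.mem_insert_of_mem hm, fun j hj =>
          (Finset.mem_insert.mp hj).elim (fun e => e ▸ h) (hmax j)⟩
    · rw [Finset.not_nonempty_iff_eq_empty] at hb
      subst hb
      refine ⟨a, Finset.mem_insert_self _ _, fun j hj => ?_⟩
      simp only [Finset.mem_insert, Finset.notMem_empty, or_false] at hj
      subst hj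
      rcases hp.1 i j j with h' | h' <;> exact h'

/-- in a B-hedonic game where every player likes someone, the grand
coalition is Nash stable. -/
theorem b_grand_nash {N : Type*} [DecidableEq N] [Fintype N]
    (p : N → N → N → Prop) (hp : CompletePreorder p)
    (hlikes : ∀ i : N, ∃ j, j ≠ i ∧ likes p i j) :
    NashStable (BWeak p)
      ⟨fun _ => Finset.univ, fun i => Finset.mem_univ i, fun _ _ _ => rfl⟩ := by
  intro i S hS hne hsp
  rcases hS with rfl | ⟨j, rfl⟩
  · obtain ⟨hw, hns⟩ := hsp
    have hB : BStrict p i (insert i ∅) Finset.univ := not_not.mp hns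
    obtain ⟨j, hji, hlj⟩ := hlikes i
    have hjmem : j ∈ (Finset.univ : Finset N).erase i :=
      Finset.mem_erase.mpr ⟨hji, Finset.mem_univ j⟩
    have hne' : ((Finset.univ : Finset N).erase i) ≠ ∅ := by
      intro h; rw [h] at hjmem; exact absurd hjmem (Finset.notMem_empty j)
    obtain ⟨m, hm, hmax⟩ := exists_max_of_cp p hp i _ ⟨j, hjmem⟩
    have hmMax : m ∈ maxSet p i ((Finset.univ : Finset N).erase i) := by
      rw [maxSet, if_neg hne']; exact ⟨hm, hmax⟩
    have hiMax : i ∈ maxSet p i ((insert i (∅ : Finset N)).erase i) := by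
      have h0 : (insert i (∅ : Finset N)).erase i = ∅ := by simp
      rw [maxSet, h0, if_pos rfl]; exact rfl
    have hpmi : p i m i := hp.2 i m j i (hmax j hjmem) hlj.1
    have hnim : ¬ p i i m := fun h => hlj.2 (hp.2 i i m j h (hmax j hjmem))
    rcases hB with h1 | ⟨h2, _⟩
    · exact (h1 i hiMax m hmMax).2 hpmi
    · exact hnim (h2 i hiMax m hmMax).1
  · exact hne rfl
end

section
/- The two-player B-hedonic game in which player 1 is merely indifferent between player 2 and himself (2 ∼₁ 1) while player 2 likes player 1 (1 ≻₂ 2) has no Nash stable partition. -/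
open Finset

namespace HPartition

variable {N : Type*}

lemma mem_part_comm (π : HPartition N) {i j : N} (h : j ∈ π.part i) : i ∈ π.part j := by
  rw [π.eq_of_mem i j h]
  exact π.mem_self i

lemma fin_two_cases (π : HPartition (Fin 2)) :
    π.part 0 = {0, 1} ∨ π.part 0 = {0} ∧ π.part 1 = {1} := by
  by_cases h : (1 : Fin 2) ∈ π.part 0
  · left
    ext x
    fin_cases x <;> simp [π.mem_self, h]
  · have h' : (0 : Fin 2) ∉ π.part 1 := fun h' => h (π.mem_part_comm h')
    right
    constructor <;> ext x <;> fin_cases x <;> simp [π.mem_self, h, h']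

end HPartition

section BHedonic

variable {N : Type*} [DecidableEq N] {p : N → N → N → Prop} {i j : N}

lemma maxSet_empty (p : N → N → N → Prop) (i : N) : maxSet p i ∅ = {i} := if_pos rfl

lemma maxSet_singleton (hj : p i j j) : maxSet p i {j} = {j} := by
  ext m
  simp only [maxSet, singleton_ne_empty, if_false, mem_singleton, forall_eq, Set.mem_ofPred_eq,
    Set.mem_singleton_iff, and_iff_left_iff_imp]
  rintro rfl
  exact hj

lemma maxSet_erase_pair (hij : i ≠ j) (hjj : p i j j) :
    maxSet p i (({i, j} : Finset N).erase i) = {j} := by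
  rw [erase_insert (by simpa using hij), maxSet_singleton hjj]

lemma maxSet_erase_singleton (p : N → N → N → Prop) (i : N) :
    maxSet p i (({i} : Finset N).erase i) = {i} := by
  rw [erase_singleton, maxSet_empty]

lemma bStrict_iff_of_maxSet_eq_singleton {S T : Finset N} {s t : N}
    (hS : maxSet p i (S.erase i) = {s}) (hT : maxSet p i (T.erase i) = {t}) :
    BStrict p i S T ↔ strictP p i s t ∨ (p i s t ∧ p i t s) ∧ #S < #T := by
  simp [BStrict, hS, hT]

lemma sPref_bWeak_iff {S T : Finset N} :
    SPref (BWeak p) i S T ↔ ¬ BStrict p i T S ∧ BStrict p i S T := by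
  simp only [SPref, BWeak, weakOf, not_not]

/-- Leaving for the empty coalition keeps the best partner (himself, `max ∅ = {i}`), which is
as good as `j`, and makes the coalition smaller. -/
lemma not_nashStable_of_indifferent_partner {π : HPartition N} (hπ : π.part i = {i, j})
    (hij : i ≠ j) (hjj : p i j j) (hself : p i i j) (hpartner : p i j i) :
    ¬ NashStable (BWeak p) π := by
  have hpair := maxSet_erase_pair hij hjj
  have halone := maxSet_erase_singleton p i
  intro hNS
  refine hNS i ∅ (Or.inl rfl) (hπ ▸ (insert_nonempty i {j}).ne_empty.symm) ?_
  rw [hπ, insert_empty, sPref_bWeak_iff, bStrict_iff_of_maxSet_eq_singleton hpair halone,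
    bStrict_iff_of_maxSet_eq_singleton halone hpair]
  refine ⟨?_, Or.inr ⟨⟨hself, hpartner⟩, by simp [hij]⟩⟩
  rintro (⟨-, hnot⟩ | ⟨-, hcard⟩)
  · exact hnot hself
  · simp [hij] at hcard

lemma not_nashStable_of_likes_singleton {π : HPartition N} (hi : π.part i = {i})
    (hj : π.part j = {j}) (hij : i ≠ j) (hjj : p i j j) (hlikes : likes p i j) :
    ¬ NashStable (BWeak p) π := by
  have hpair := maxSet_erase_pair hij hjj
  have halone := maxSet_erase_singleton p i
  intro hNS
  refine hNS i {j} (Or.inr ⟨j, hj.symm⟩) (by simp [hi, hij.symm]) ?_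
  rw [hi, sPref_bWeak_iff, bStrict_iff_of_maxSet_eq_singleton hpair halone,
    bStrict_iff_of_maxSet_eq_singleton halone hpair]
  refine ⟨?_, Or.inl hlikes⟩
  rintro (⟨hii, -⟩ | ⟨⟨hii, -⟩, -⟩) <;> exact hlikes.2 hii

end BHedonic

/-- the two-player B-hedonic game where 2 ∼₁ 1 and 1 ≻₂ 2 has no
Nash stable partition. -/
theorem b_two_player_no_ns
    (p : Fin 2 → Fin 2 → Fin 2 → Prop) (hp : CompletePreorder p)
    (h1 : p 0 1 0 ∧ p 0 0 1)
    (h2 : strictP p 1 0 1) :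
    ∀ π : HPartition (Fin 2), ¬ NashStable (BWeak p) π := by
  intro π hNS
  have hrefl : ∀ i j, p i j j := fun i j => (hp.1 i j j).elim id id
  rcases π.fin_two_cases with hgrand | ⟨h0, h1'⟩
  · exact not_nashStable_of_indifferent_partner hgrand (by decide) (hrefl 0 1) h1.2 h1.1 hNS
  · exact not_nashStable_of_likes_singleton h1' h0 (by decide) (hrefl 1 0) h2 hNS
end

section
/- In the 5-player 'extended stalker game' with strict preferences where for i ∈ {2,3,4}: i+1 ≻ᵢ i−1 ≻ᵢ i ≻ᵢ (all others), for player 5: 1 ≻₅ 4 ≻₅ 5 ≻₅ (all others), and for player 1: 2 ≻₁ 5 ≻₁ 1 ≻₁ (all others), interpreted as a W-hedonic game (or BB-hedonic game), no partition of {1,...,5} is individually stable. -/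
open Finset

/-- Utility encoding the extended stalker game's strict preferences:
player `i` ranks `i+1` top, then `i+4` (= i−1), then himself, then the rest. -/
def uES : Fin 5 → Fin 5 → ℕ := fun i j =>
  if j = i + 1 then 3 else if j = i + 4 then 2 else if j = i then 1 else 0

/-- The induced preference over players. -/
def pES : Fin 5 → Fin 5 → Fin 5 → Prop := fun i j k => uES i k ≤ uES i j

/-- worst value of a coalition from `i`'s viewpoint (1 if alone). -/
def wv (i : Fin 5) (S : Finset (Fin 5)) : ℕ :=
  if h : (S.erase i).Nonempty then (S.erase i).inf' h (uES i) else 1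

lemma dA : ∀ i : Fin 5, uES i i = 1 := by decide
lemma dB : ∀ i j : Fin 5, 1 ≤ uES i j → j = i + 1 ∨ j = i + 4 ∨ j = i := by decide
lemma dC : ∀ i : Fin 5, ¬(i + 4 = i + 1 + 1 ∨ i + 4 = i + 1 + 4 ∨ i + 4 = i + 1) := by decide
lemma dD : ∀ j : Fin 5, uES (j + 4) j = 3 := by decide
lemma dE : ∀ i : Fin 5, uES i (i + 4) = 2 := by decide
lemma dF : ∀ j : Fin 5, j + 4 ≠ j := by decide
lemma dG : ∀ j : Fin 5, j + 4 + 1 = j := by decide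

lemma wv_of_minSet {i : Fin 5} {S : Finset (Fin 5)} {s : Fin 5}
    (hs : s ∈ minSet pES i (S.erase i)) : uES i s = wv i S := by
  by_cases h : (S.erase i) = ∅
  · simp only [minSet, if_pos h, Set.mem_singleton_iff] at hs
    subst hs
    rw [wv, dif_neg (by simp [h]), dA]
  · have hne : (S.erase i).Nonempty := Finset.nonempty_iff_ne_empty.2 h
    simp only [minSet, if_neg h, Set.mem_setOf_eq] at hs
    obtain ⟨hsmem, hmin⟩ := hs
    rw [wv, dif_pos hne]
    exact le_antisymm (Finset.le_inf' _ _ fun j hj => hmin j hj) (Finset.inf'_le _ hsmem)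

lemma minSet_nonempty' (i : Fin 5) (S : Finset (Fin 5)) :
    ∃ s, s ∈ minSet pES i (S.erase i) := by
  by_cases h : (S.erase i) = ∅
  · exact ⟨i, by simp [minSet, h]⟩
  · have hne : (S.erase i).Nonempty := Finset.nonempty_iff_ne_empty.2 h
    obtain ⟨b, hb, hmin⟩ := Finset.exists_min_image (S.erase i) (uES i) hne
    refine ⟨b, ?_⟩
    simp only [minSet, if_neg h, Set.mem_setOf_eq]
    exact ⟨hb, fun j hj => hmin j hj⟩

lemma wpref_iff (i : Fin 5) (S T : Finset (Fin 5)) :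
    WPref pES i S T ↔ wv i T ≤ wv i S := by
  constructor
  · intro h
    obtain ⟨s, hs⟩ := minSet_nonempty' i S
    obtain ⟨t, ht⟩ := minSet_nonempty' i T
    have hst := h s hs t ht
    simp only [pES] at hst
    rwa [wv_of_minSet hs, wv_of_minSet ht] at hst
  · intro h s hs t ht
    show uES i t ≤ uES i s
    rw [wv_of_minSet hs, wv_of_minSet ht]; exact h

lemma spref_iff (i : Fin 5) (S T : Finset (Fin 5)) :
    SPref (WPref pES) i S T ↔ wv i T < wv i S := by
  rw [SPref, wpref_iff, wpref_iff, lt_iff_le_not_ge]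

lemma wv_le {i k : Fin 5} {S : Finset (Fin 5)} (hk : k ∈ S.erase i) :
    wv i S ≤ uES i k := by
  rw [wv, dif_pos ⟨k, hk⟩]
  exact Finset.inf'_le _ hk

lemma dev {π : HPartition (Fin 5)} (h : IndStable (WPref pES) π) (i : Fin 5)
    (S : Finset (Fin 5)) (hS : IsCoalitionOf π S) (hne : S ≠ π.part i)
    (h1 : wv i (π.part i) < wv i (insert i S))
    (h2 : ∀ j ∈ S, wv j S ≤ wv j (insert i S)) : False :=
  h i S hS hne ⟨(spref_iff _ _ _).2 h1, fun j hj => (wpref_iff _ _ _).2 (h2 j hj)⟩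

lemma wv_insert_singleton {i j : Fin 5} (h : i ≠ j) :
    wv i (insert i {j}) = uES i j := by
  have he : (insert i ({j} : Finset (Fin 5))).erase i = {j} :=
    Finset.erase_insert (by simpa using h)
  simp [wv, he]

/-- the extended stalker game (as a W-hedonic game) has no
individually stable partition. -/
theorem extended_stalker_no_is :
    ∀ π : HPartition (Fin 5), ¬ IndStable (WPref pES) π := by
  intro π h
  by_cases hge : ∀ i, 1 ≤ wv i (π.part i)
  · -- every coalition is individually rational
    have hmem : ∀ i j, j ∈ π.part i → j = i + 1 ∨ j = i + 4 ∨ j = i := by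
      intro i j hj
      by_cases hji : j = i
      · exact Or.inr (Or.inr hji)
      · have hj' : j ∈ (π.part i).erase i := Finset.mem_erase.2 ⟨hji, hj⟩
        exact dB i j (le_trans (hge i) (wv_le hj'))
    have hnotboth : ∀ i, ¬ (i + 1 ∈ π.part i ∧ i + 4 ∈ π.part i) := by
      rintro i ⟨h1, h4⟩
      have e : π.part (i + 1) = π.part i := π.eq_of_mem i (i + 1) h1
      have h4' : i + 4 ∈ π.part (i + 1) := by rw [e]; exact h4
      exact dC i (hmem (i + 1) (i + 4) h4')
    have hsing : ∃ j, π.part j = {j} := by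
      by_contra hns
      push_neg at hns
      have hsome : ∀ j, j + 1 ∈ π.part j ∨ j + 4 ∈ π.part j := by
        intro j
        by_contra hc
        push_neg at hc
        obtain ⟨h1, h4⟩ := hc
        apply hns j
        refine Finset.eq_singleton_iff_unique_mem.2 ⟨π.mem_self j, ?_⟩
        intro k hk
        rcases hmem j k hk with hx | hx | hx
        · rw [hx] at hk; exact absurd hk h1
        · rw [hx] at hk; exact absurd hk h4
        · exact hx
      have hsome0 := hsome 0
      rw [show (0:Fin 5) + 1 = 1 by decide, show (0:Fin 5) + 4 = 4 by decide] at hsome0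
      rcases hsome0 with h01 | h04
      · -- 1 ∈ part 0
        have e10 : π.part 1 = π.part 0 := π.eq_of_mem 0 1 h01
        have hsome2 := hsome 2
        rw [show (2:Fin 5) + 1 = 3 by decide, show (2:Fin 5) + 4 = 1 by decide] at hsome2
        rcases hsome2 with h23 | h21
        · have e32 : π.part 3 = π.part 2 := π.eq_of_mem 2 3 h23
          have hsome4 := hsome 4
          rw [show (4:Fin 5) + 1 = 0 by decide, show (4:Fin 5) + 4 = 3 by decide] at hsome4
          rcases hsome4 with h40 | h43
          · have e04 : π.part 0 = π.part 4 := π.eq_of_mem 4 0 h40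
            have h4in0 : (4:Fin 5) ∈ π.part 0 := by rw [e04]; exact π.mem_self 4
            exact hnotboth 0 ⟨by rw [show (0:Fin 5) + 1 = 1 by decide]; exact h01,
              by rw [show (0:Fin 5) + 4 = 4 by decide]; exact h4in0⟩
          · have e34 : π.part 3 = π.part 4 := π.eq_of_mem 4 3 h43
            have h4in3 : (4:Fin 5) ∈ π.part 3 := by rw [e34]; exact π.mem_self 4
            have h2in3 : (2:Fin 5) ∈ π.part 3 := by rw [e32]; exact π.mem_self 2
            exact hnotboth 3 ⟨by rw [show (3:Fin 5) + 1 = 4 by decide]; exact h4in3,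
              by rw [show (3:Fin 5) + 4 = 2 by decide]; exact h2in3⟩
        · have e12 : π.part 1 = π.part 2 := π.eq_of_mem 2 1 h21
          have h2in0 : (2:Fin 5) ∈ π.part 0 := by
            rw [← e10, e12]; exact π.mem_self 2
          rcases hmem 0 2 h2in0 with hx | hx | hx <;> exact absurd hx (by decide)
      · -- 4 ∈ part 0
        have e40 : π.part 4 = π.part 0 := π.eq_of_mem 0 4 h04
        have hsome1 := hsome 1
        rw [show (1:Fin 5) + 1 = 2 by decide, show (1:Fin 5) + 4 = 0 by decide] at hsome1
        rcases hsome1 with h12 | h10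
        · have e21 : π.part 2 = π.part 1 := π.eq_of_mem 1 2 h12
          have hsome3 := hsome 3
          rw [show (3:Fin 5) + 1 = 4 by decide, show (3:Fin 5) + 4 = 2 by decide] at hsome3
          rcases hsome3 with h34 | h32
          · have e43 : π.part 4 = π.part 3 := π.eq_of_mem 3 4 h34
            have h3in4 : (3:Fin 5) ∈ π.part 4 := by rw [e43]; exact π.mem_self 3
            have h0in4 : (0:Fin 5) ∈ π.part 4 := by rw [e40]; exact π.mem_self 0
            exact hnotboth 4 ⟨by rw [show (4:Fin 5) + 1 = 0 by decide]; exact h0in4,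
              by rw [show (4:Fin 5) + 4 = 3 by decide]; exact h3in4⟩
          · have e23 : π.part 2 = π.part 3 := π.eq_of_mem 3 2 h32
            have h3in2 : (3:Fin 5) ∈ π.part 2 := by rw [e23]; exact π.mem_self 3
            have h1in2 : (1:Fin 5) ∈ π.part 2 := by rw [e21]; exact π.mem_self 1
            exact hnotboth 2 ⟨by rw [show (2:Fin 5) + 1 = 3 by decide]; exact h3in2,
              by rw [show (2:Fin 5) + 4 = 1 by decide]; exact h1in2⟩
        · have e01 : π.part 0 = π.part 1 := π.eq_of_mem 1 0 h10
          have h1in0 : (1:Fin 5) ∈ π.part 0 := by rw [e01]; exact π.mem_self 1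
          exact hnotboth 0 ⟨by rw [show (0:Fin 5) + 1 = 1 by decide]; exact h1in0,
            by rw [show (0:Fin 5) + 4 = 4 by decide]; exact h04⟩
    obtain ⟨j, hj⟩ := hsing
    -- player j+4 joins the singleton {j}
    have hij : j + 4 ≠ j := dF j
    have hjnotin : ∀ k, j ∈ π.part k → k = j := by
      intro k hk
      have := π.eq_of_mem k j hk
      have hkk : k ∈ π.part j := by rw [this]; exact π.mem_self k
      rw [hj] at hkk
      simpa using hkk
    refine dev h (j + 4) {j} (Or.inr ⟨j, hj.symm⟩) ?_ ?_ ?_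
    · intro e
      exact hij (hjnotin (j + 4) (by rw [← e]; exact Finset.mem_singleton_self j))
    · -- strict improvement
      have h3 : wv (j + 4) (insert (j + 4) {j}) = 3 := by
        rw [wv_insert_singleton hij, dD]
      have hb : wv (j + 4) (π.part (j + 4)) ≤ 2 := by
        rcases ((π.part (j + 4)).erase (j + 4)).eq_empty_or_nonempty with he | ⟨k, hk⟩
        · rw [wv, dif_neg (by simp [he])]; norm_num
        · have hkne : k ≠ j + 4 := Finset.ne_of_mem_erase hk
          have hkmem : k ∈ π.part (j + 4) := Finset.mem_of_mem_erase hk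
          have hkj : k ≠ j := by
            intro e; rw [e] at hkmem
            exact dF j (hjnotin (j + 4) hkmem)
          have hk4 : k = j + 4 + 4 := by
            rcases hmem (j + 4) k hkmem with hx | hx | hx
            · rw [dG j] at hx; exact absurd hx hkj
            · exact hx
            · exact absurd hx hkne
          calc wv (j + 4) (π.part (j + 4)) ≤ uES (j + 4) k := wv_le hk
            _ = 2 := by rw [hk4, dE]
      rw [h3]; omega
    · intro k hk
      rw [Finset.mem_singleton] at hk
      subst hk
      have h1 : wv k {k} = 1 := by
        rw [wv, dif_neg (by simp)]
      have h2 : wv k (insert (k + 4) {k}) = 2 := by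
        have he : (insert (k + 4) ({k} : Finset (Fin 5))).erase k = {k + 4} := by
          rw [Finset.erase_insert_of_ne (dF k), Finset.erase_singleton]; rfl
        simp [wv, he, dE]
      rw [h1, h2]; norm_num
  · push_neg at hge
    obtain ⟨i, hi⟩ := hge
    refine dev h i ∅ (Or.inl rfl) ?_ ?_ (by simp)
    · intro he
      have := π.mem_self i
      rw [← he] at this
      simp at this
    · have h1 : wv i (insert i ∅) = 1 := by
        rw [wv, dif_neg (by simp)]
      omega
end

section
/- In the 5-player extended stalker game (preferences as above), every individually rational partition other than the all-singletons partition consists of exactly one singleton and two pairs of the form {i, i+1} (indices mod 5), i.e., the only individually rational coalitions of size ≥ 2 are the pairs {1,2}, {2,3}, {3,4}, {4,5}, {5,1}. -/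
open Finset

/-! Under W-hedonic preferences, a partition is individually rational iff every player ranks
each of his partners at least as high as himself. In the extended stalker game the players `i`
ranks that high are `i` and his two cyclic neighbours, so every coalition is a clique of the
5-cycle; the 5-cycle has no triangle, hence a coalition with two or more members is an edge. -/

section UtilityPreferences

variable {N α : Type*} [DecidableEq N] [LinearOrder α]

theorem wPref_singleton_iff (u : N → N → α) (i : N) (S : Finset N) :
    WPref (fun i j k => u i k ≤ u i j) i S {i} ↔ ∀ j ∈ S, u i i ≤ u i j := by
  have min_singleton : minSet (fun i j k => u i k ≤ u i j) i (({i} : Finset N).erase i) = {i} := by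
    simp [minSet]
  simp only [WPref, min_singleton, Set.mem_singleton_iff, forall_eq]
  constructor
  · intro h j hj
    obtain rfl | hji := eq_or_ne j i
    · exact le_rfl
    have hne : (S.erase i).Nonempty := ⟨j, mem_erase.2 ⟨hji, hj⟩⟩
    obtain ⟨m, hm, hmin⟩ := exists_min_image (S.erase i) (u i) hne
    have hm_min : m ∈ minSet (fun i j k => u i k ≤ u i j) i (S.erase i) := by
      rw [minSet, if_neg hne.ne_empty]
      exact ⟨hm, hmin⟩
    exact (h m hm_min).trans (hmin j (mem_erase.2 ⟨hji, hj⟩))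
  · intro h s hs
    unfold minSet at hs
    split_ifs at hs with hempty
    · rw [hs]
    · exact h s (mem_of_mem_erase hs.1)

theorem indRational_wPref_iff (u : N → N → α) (π : HPartition N) :
    IndRational (WPref fun i j k => u i k ≤ u i j) π ↔ ∀ i, ∀ j ∈ π.part i, u i i ≤ u i j :=
  forall_congr' fun i => wPref_singleton_iff u i (π.part i)

end UtilityPreferences

theorem uES_self_le_iff (i j : Fin 5) : uES i i ≤ uES i j ↔ j = i ∨ j = i + 1 ∨ j = i + 4 := by
  revert i j
  decide

theorem exists_eq_pair_of_pairwise_cyclic_adjacent (S : Finset (Fin 5)) (hS : 2 ≤ S.card)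
    (hadj : ∀ k ∈ S, ∀ j ∈ S, j = k ∨ j = k + 1 ∨ j = k + 4) :
    ∃ j : Fin 5, S = {j, j + 1} := by
  revert S
  decide

/-- in the extended stalker game, every coalition of size ≥ 2 of an
individually rational partition is one of the pairs {j, j+1}. -/
theorem extended_stalker_ir_pairs
    (π : HPartition (Fin 5)) (hIR : IndRational (WPref pES) π) :
    ∀ i : Fin 5, 2 ≤ (π.part i).card → ∃ j : Fin 5, π.part i = {j, j + 1} := by
  have likes_partners := (indRational_wPref_iff uES π).1 hIR
  intro i hcard
  refine exists_eq_pair_of_pairwise_cyclic_adjacent _ hcard fun k hk j hj => ?_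
  rw [← uES_self_le_iff]
  exact likes_partners k j (π.eq_of_mem i k hk ▸ hj)
end

section
/- For BB-hedonic (equivalently WW- or W-hedonic with at most n(n−1) improvement steps) games, any sequence of contractual individually stable (CIS) deviations starting from the all-singletons partition terminates after at most n(n−1) steps, where n = |N|; hence a partition that is both CIS and individually rational exists and is reached by this process. -/
/-!
Measure each player's satisfaction by the rank, in his own preference over players, of the best
member of his coalition. Starting from singletons every coalition is acceptable to all its
members, and in a BB-hedonic game a CIS deviation keeps it so: nobody is worse off, so nobody's
best partner gets worse, while the deviator's best partner gets strictly better. The sum of the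
ranks therefore increases with every deviation, and it is at most `n (n - 1)`. A partition that
maximises this potential among the individually rational ones admits no CIS deviation.
-/

open Finset

section

variable {N : Type*}

theorem HPartition.part_injective : Function.Injective (HPartition.part (N := N)) := by
  rintro ⟨_, _, _⟩ ⟨_, _, _⟩ h
  cases h
  rfl

instance [Finite N] : Finite (HPartition N) :=
  Finite.of_injective _ HPartition.part_injective

def HPartition.singletons (N : Type*) : HPartition N where
  part i := {i}
  mem_self := mem_singleton_self
  eq_of_mem _ _ h := by rw [mem_singleton.1 h]

theorem IsCoalitionOf.part_eq {π : HPartition N} {S : Finset N} (hS : IsCoalitionOf π S)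
    {k : N} (hk : k ∈ S) : π.part k = S := by
  rcases hS with rfl | ⟨j, rfl⟩
  · simp at hk
  · exact π.eq_of_mem j k hk

section Coalitions

variable [DecidableEq N]

def HPartition.move (π : HPartition N) (i : N) (S : Finset N) (hS : IsCoalitionOf π S) :
    HPartition N where
  part k := if k = i ∨ k ∈ S then insert i S else (π.part k).erase i
  mem_self k := by
    split_ifs with hk
    · rcases hk with rfl | hk
      exacts [mem_insert_self _ _, mem_insert_of_mem hk]
    · exact mem_erase.2 ⟨fun hki => hk (Or.inl hki), π.mem_self k⟩
  eq_of_mem k j hj := by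
    by_cases hk : k = i ∨ k ∈ S
    · rw [if_pos hk] at hj ⊢
      rw [if_pos (mem_insert.1 hj)]
    · rw [if_neg hk] at hj ⊢
      obtain ⟨hji, hjk⟩ := mem_erase.1 hj
      have hpart : π.part j = π.part k := π.eq_of_mem k j hjk
      have hj' : ¬(j = i ∨ j ∈ S) := by
        rintro (rfl | hjS)
        · exact hji rfl
        · exact hk (Or.inr (by rw [← hS.part_eq hjS, hpart]; exact π.mem_self k))
      rw [if_neg hj', hpart]

theorem exists_cisDeviation_of_not_contIndStable {pref : N → Finset N → Finset N → Prop}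
    {π : HPartition N} (h : ¬ ContIndStable pref π) : ∃ π', CISDeviation pref π π' := by
  simp only [ContIndStable, not_forall, not_not] at h
  obtain ⟨i, S, hS, hne, hsp, hjoin, hleave⟩ := h
  have hiS : i ∉ S := fun hi => hne (hS.part_eq hi).symm
  exact ⟨π.move i S hS, i, S, hS, hne, hiS, hsp, hjoin, hleave, fun _ => rfl⟩

theorem CISDeviation.pref_part {pref : N → Finset N → Finset N → Prop} {π π' : HPartition N}
    (hdev : CISDeviation pref π π') (hrefl : ∀ k, pref k (π.part k) (π.part k)) (k : N) :
    pref k (π'.part k) (π.part k) := by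
  obtain ⟨i, S, hS, -, -, hsp, hjoin, hleave, hπ'⟩ := hdev
  rw [hπ' k]
  split_ifs with hk
  · rcases hk with rfl | hk
    · exact hsp.1
    · rw [hS.part_eq hk]
      exact hjoin k hk
  · by_cases hki : k ∈ π.part i
    · rw [π.eq_of_mem i k hki]
      exact hleave k hki fun hk' => hk (Or.inl hk')
    · have hik : i ∉ π.part k := fun h => hki (π.eq_of_mem k i h ▸ π.mem_self k)
      rw [erase_eq_of_notMem hik]
      exact hrefl k

theorem CISDeviation.exists_sPref {pref : N → Finset N → Finset N → Prop} {π π' : HPartition N}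
    (hdev : CISDeviation pref π π') : ∃ i, SPref pref i (π'.part i) (π.part i) := by
  obtain ⟨i, S, -, -, -, hsp, -, -, hπ'⟩ := hdev
  exact ⟨i, by rwa [hπ' i, if_pos (Or.inl rfl)]⟩

end Coalitions

section Preorder

variable {p : N → N → N → Prop}

theorem strictP_irrefl {i m : N} : ¬ strictP p i m m :=
  fun h => h.2 h.1

theorem CompletePreorder.refl (hp : CompletePreorder p) (i a : N) : p i a a :=
  (hp.1 i a a).elim id id

theorem CompletePreorder.trans (hp : CompletePreorder p) {i a b c : N} (hab : p i a b)
    (hbc : p i b c) : p i a c :=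
  hp.2 i a b c hab hbc

theorem CompletePreorder.strictP_of_not (hp : CompletePreorder p) {i a b : N} (h : ¬ p i a b) :
    strictP p i b a :=
  ⟨(hp.1 i a b).resolve_left h, h⟩

theorem CompletePreorder.of_not_unacc (hp : CompletePreorder p) {i j : N} (h : ¬ unacc p i j) :
    p i j i :=
  by_contra fun hji => h (hp.strictP_of_not hji)

noncomputable def rank [Fintype N] (p : N → N → N → Prop) (i m : N) : ℕ :=
  open Classical in #{j | strictP p i m j}

variable [Fintype N]

theorem rank_le_rank (hp : CompletePreorder p) {i m m' : N} (h : p i m' m) :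
    rank p i m ≤ rank p i m' := by
  classical
  refine card_le_card fun j hj => ?_
  simp only [mem_filter, mem_univ, true_and] at hj ⊢
  exact ⟨hp.trans h hj.1, fun hjm' => hj.2 (hp.trans hjm' h)⟩

theorem rank_lt_rank (hp : CompletePreorder p) {i m m' : N} (h : strictP p i m' m) :
    rank p i m < rank p i m' := by
  classical
  refine card_lt_card ((ssubset_iff_of_subset fun j hj => ?_).2 ⟨m, ?_, ?_⟩)
  · simp only [mem_filter, mem_univ, true_and] at hj ⊢
    exact ⟨hp.trans h.1 hj.1, fun hjm' => hj.2 (hp.trans hjm' h.1)⟩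
  · simpa using h
  · exact fun hm => strictP_irrefl (mem_filter.1 hm).2

theorem rank_le_card_sub_one (i m : N) : rank p i m ≤ Fintype.card N - 1 := by
  classical
  calc rank p i m ≤ #(univ.erase m) :=
        card_le_card fun j hj =>
          mem_erase.2 ⟨by rintro rfl; exact strictP_irrefl (mem_filter.1 hj).2, mem_univ j⟩
    _ = Fintype.card N - 1 := by rw [card_erase_of_mem (mem_univ m), card_univ]

theorem CompletePreorder.exists_max (hp : CompletePreorder p) (i : N) {J : Finset N}
    (hJ : J.Nonempty) : ∃ m ∈ J, ∀ j ∈ J, p i m j := by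
  obtain ⟨m, hm, hmax⟩ := exists_max_image J (rank p i) hJ
  exact ⟨m, hm, fun j hj => by_contra fun hmj =>
    (hmax j hj).not_gt (rank_lt_rank hp (hp.strictP_of_not hmj))⟩

end Preorder

section MaxSet

variable [DecidableEq N] {p : N → N → N → Prop} {i : N} {J : Finset N}

theorem maxSet_nonempty [Fintype N] (hp : CompletePreorder p) (i : N) (J : Finset N) :
    (maxSet p i J).Nonempty := by
  unfold maxSet
  split_ifs with hJ
  · exact Set.singleton_nonempty i
  · exact hp.exists_max i (nonempty_iff_ne_empty.2 hJ)

theorem CompletePreorder.of_mem_maxSet (hp : CompletePreorder p) {m m' : N}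
    (hm : m ∈ maxSet p i J) (hm' : m' ∈ maxSet p i J) : p i m m' := by
  unfold maxSet at hm hm'
  split_ifs at hm hm'
  · rw [Set.mem_singleton_iff.1 hm, Set.mem_singleton_iff.1 hm']
    exact hp.refl i i
  · exact hm.2 m' hm'.1

theorem CompletePreorder.of_mem_maxSet_of_forall_not_unacc (hp : CompletePreorder p) {m : N}
    (hJ : ∀ j ∈ J, ¬ unacc p i j) (hm : m ∈ maxSet p i J) : p i m i := by
  unfold maxSet at hm
  split_ifs at hm
  · rw [Set.mem_singleton_iff.1 hm]
    exact hp.refl i i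
  · exact hp.of_not_unacc (hJ m hm.1)

end MaxSet

section BBHedonic

variable [DecidableEq N] {p : N → N → N → Prop} {k : N} {S S' : Finset N}

def Acceptable (p : N → N → N → Prop) (k : N) (S : Finset N) : Prop :=
  ∀ j ∈ S.erase k, ¬ unacc p k j

theorem bbPref_singleton_iff (hp : CompletePreorder p) :
    BBPref p k S {k} ↔ Acceptable p k S := by
  refine ⟨fun h => ?_, fun h => Or.inr ⟨h, by simp, fun s hs t ht => ?_⟩⟩
  · rcases h with ⟨j, hj, -⟩ | ⟨h, -⟩
    · simp at hj
    · exact h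
  · rw [erase_singleton] at ht
    simp only [maxSet, if_pos, Set.mem_singleton_iff] at ht
    subst ht
    exact hp.of_mem_maxSet_of_forall_not_unacc h hs

theorem indRational_bbPref_iff (hp : CompletePreorder p) {π : HPartition N} :
    IndRational (BBPref p) π ↔ ∀ k, Acceptable p k (π.part k) :=
  forall_congr' fun _ => bbPref_singleton_iff hp

theorem indRational_bbPref_of_part_eq_singleton (hp : CompletePreorder p) {π : HPartition N}
    (h : ∀ i, π.part i = {i}) : IndRational (BBPref p) π := by
  rw [indRational_bbPref_iff hp]
  intro k j hj
  rw [h k, erase_singleton] at hj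
  exact absurd hj (notMem_empty j)

theorem BBPref.refl (hp : CompletePreorder p) (h : Acceptable p k S) : BBPref p k S S :=
  Or.inr ⟨h, h, fun _ hs _ ht => hp.of_mem_maxSet hs ht⟩

theorem BBPref.resolve_acceptable (h : BBPref p k S' S) (hS : Acceptable p k S) :
    Acceptable p k S' ∧
      ∀ s ∈ maxSet p k (S'.erase k), ∀ t ∈ maxSet p k (S.erase k), p k s t := by
  rcases h with ⟨j, hj, hu⟩ | ⟨hS', -, hmax⟩
  · exact absurd hu (hS j hj)
  · exact ⟨hS', hmax⟩

variable {v : N → Finset N → N} (hv : ∀ i S, v i S ∈ maxSet p i (S.erase i))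
include hv

theorem BBPref.best_le (h : BBPref p k S' S) (hS : Acceptable p k S) :
    p k (v k S') (v k S) :=
  (h.resolve_acceptable hS).2 _ (hv k S') _ (hv k S)

theorem SPref.best_lt (hp : CompletePreorder p) (h : SPref (BBPref p) k S' S)
    (hS : Acceptable p k S) : strictP p k (v k S') (v k S) := by
  refine ⟨h.1.best_le hv hS, fun hlt => h.2 (Or.inr ⟨hS, (h.1.resolve_acceptable hS).1, ?_⟩)⟩
  intro s hs t ht
  exact hp.trans (hp.trans (hp.of_mem_maxSet hs (hv k S)) hlt) (hp.of_mem_maxSet (hv k S') ht)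

end BBHedonic

theorem length_le_of_bounded_potential {α : Type*} (P : α → Prop) (F : α → ℕ) {B : ℕ}
    (hB : ∀ a, F a ≤ B) (s : ℕ → α) {L : ℕ} (h0 : P (s 0))
    (hstep : ∀ t < L, P (s t) → P (s (t + 1)) ∧ F (s t) < F (s (t + 1))) : L ≤ B := by
  have hinv : ∀ t ≤ L, P (s t) ∧ t ≤ F (s t) := by
    intro t
    induction t with
    | zero => exact fun _ => ⟨h0, Nat.zero_le _⟩
    | succ t ih =>
      intro ht
      obtain ⟨hPt, hFt⟩ := ih (Nat.le_of_succ_le ht)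
      obtain ⟨hPt', hlt⟩ := hstep t ht hPt
      exact ⟨hPt', hFt.trans_lt hlt⟩
  exact (hinv L le_rfl).2.trans (hB _)

section Potential

variable [Fintype N] {p : N → N → N → Prop}

noncomputable def potential (p : N → N → N → Prop) (v : N → Finset N → N) (π : HPartition N) :
    ℕ :=
  ∑ k, rank p k (v k (π.part k))

theorem potential_le_card_mul (v : N → Finset N → N) (π : HPartition N) :
    potential p v π ≤ Fintype.card N * (Fintype.card N - 1) :=
  calc potential p v π ≤ ∑ _k : N, (Fintype.card N - 1) :=
        sum_le_sum fun k _ => rank_le_card_sub_one k _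
    _ = Fintype.card N * (Fintype.card N - 1) := by rw [sum_const, card_univ, smul_eq_mul]

theorem CISDeviation.indRational_and_potential_lt [DecidableEq N] {v : N → Finset N → N}
    (hv : ∀ i S, v i S ∈ maxSet p i (S.erase i)) (hp : CompletePreorder p) {π π' : HPartition N}
    (hdev : CISDeviation (BBPref p) π π') (hπ : IndRational (BBPref p) π) :
    IndRational (BBPref p) π' ∧ potential p v π < potential p v π' := by
  rw [indRational_bbPref_iff hp] at hπ ⊢
  have hweak (k : N) : BBPref p k (π'.part k) (π.part k) :=
    hdev.pref_part (fun k => BBPref.refl hp (hπ k)) k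
  obtain ⟨i, hi⟩ := hdev.exists_sPref
  refine ⟨fun k => ((hweak k).resolve_acceptable (hπ k)).1, ?_⟩
  exact sum_lt_sum (fun k _ => rank_le_rank hp ((hweak k).best_le hv (hπ k)))
    ⟨i, mem_univ i, rank_lt_rank hp (hi.best_lt hv hp (hπ i))⟩

end Potential

end

/-- in a BB-hedonic game, any sequence of CIS deviations starting
from the all-singletons partition has length at most n(n−1); hence a partition
that is both CIS and individually rational exists. -/
theorem bb_cis_terminates {N : Type*} [DecidableEq N] [Fintype N]
    (p : N → N → N → Prop) (hp : CompletePreorder p) :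
    (∀ (L : ℕ) (π : ℕ → HPartition N),
      (∀ i, (π 0).part i = {i}) →
      (∀ t, t < L → CISDeviation (BBPref p) (π t) (π (t + 1))) →
      L ≤ Fintype.card N * (Fintype.card N - 1)) ∧
    ∃ σ : HPartition N, ContIndStable (BBPref p) σ ∧ IndRational (BBPref p) σ := by
  choose v hv using fun i (S : Finset N) => maxSet_nonempty hp i (S.erase i)
  refine ⟨fun L π h0 hdev => ?_, ?_⟩
  · exact length_le_of_bounded_potential (IndRational (BBPref p)) (potential p v)
      (potential_le_card_mul v) π (indRational_bbPref_of_part_eq_singleton hp h0)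
      fun t ht hπt => (hdev t ht).indRational_and_potential_lt hv hp hπt
  · obtain ⟨σ, hσ, hmax⟩ := Set.exists_max_image {σ | IndRational (BBPref p) σ} (potential p v)
      (Set.toFinite _)
      ⟨HPartition.singletons N, indRational_bbPref_of_part_eq_singleton hp fun _ => rfl⟩
    refine ⟨σ, ?_, hσ⟩
    by_contra hσ_unstable
    obtain ⟨σ', hdev⟩ := exists_cisDeviation_of_not_contIndStable hσ_unstable
    obtain ⟨hσ', hlt⟩ := hdev.indRational_and_potential_lt hv hp hσ
    exact (hmax σ' hσ').not_gt hlt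
end

section
/- In a WW-hedonic game, a partition π is individually rational if and only if it is individually rational in the corresponding W-hedonic game with the same underlying preferences over players; moreover, for individually rational partitions the induced preferences over coalitions of the WW-hedonic and W-hedonic games coincide. -/
open Finset

/-! If `T` is W-acceptable to `i`, then its worst member, and hence every member, is weakly
preferred by `i` to `i` himself; so `T` contains no unacceptable player and the extra clause of
the WW-extension never fires. Individual rationality is the case `T = {i}`. -/

theorem Finset.exists_forall_rel_of_total {α : Type*} {r : α → α → Prop}
    (total : ∀ a b, r a b ∨ r b a) (trans : ∀ a b c, r a b → r b c → r a c)
    {s : Finset α} (hs : s.Nonempty) : ∃ m ∈ s, ∀ x ∈ s, r x m := by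
  induction hs using Finset.Nonempty.cons_induction with
  | singleton a => exact ⟨a, mem_singleton_self a, fun x hx => by
      rw [mem_singleton.mp hx]; exact (total a a).elim id id⟩
  | cons a s _ _ ih =>
    obtain ⟨m, hm, hmin⟩ := ih
    rcases total a m with ham | hma
    · refine ⟨m, mem_cons_of_mem hm, fun x hx => ?_⟩
      rcases mem_cons.mp hx with rfl | hx
      exacts [ham, hmin x hx]
    · refine ⟨a, mem_cons_self a s, fun x hx => ?_⟩
      rcases mem_cons.mp hx with rfl | hx
      exacts [(total x x).elim id id, trans x m a (hmin x hx) hma]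

section WHedonic

variable {N : Type*} [DecidableEq N] {p : N → N → N → Prop}

theorem wPref_singleton_self (hp : CompletePreorder p) (i : N) : WPref p i {i} {i} := by
  simpa [WPref, minSet] using hp.1 i i i

theorem rel_self_of_wPref_singleton (hp : CompletePreorder p) {i j : N} {T : Finset N}
    (hT : WPref p i T {i}) (hj : j ∈ T.erase i) : p i j i := by
  obtain ⟨m, hm, hmin⟩ :=
    Finset.exists_forall_rel_of_total (hp.1 i) (hp.2 i) ⟨j, hj⟩
  have hm_min : m ∈ minSet p i (T.erase i) := by
    rw [minSet, if_neg (nonempty_iff_ne_empty.mp ⟨j, hj⟩)]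
    exact ⟨hm, hmin⟩
  have hself_min : i ∈ minSet p i (({i} : Finset N).erase i) := by
    simp [minSet]
  exact hp.2 i j m i (hmin j hj) (hT m hm_min i hself_min)

theorem wwPref_iff_wPref_of_acceptable (hp : CompletePreorder p) {i : N} {S T : Finset N}
    (hT : WPref p i T {i}) : WWPref p i S T ↔ WPref p i S T := by
  refine ⟨?_, Or.inr⟩
  rintro (⟨j, hj, -, hnot⟩ | hw)
  · exact absurd (rel_self_of_wPref_singleton hp hT hj) hnot
  · exact hw

end WHedonic

theorem ww_w_coincide_general {N : Type*} [DecidableEq N]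
    (p : N → N → N → Prop) (hp : CompletePreorder p) :
    (∀ π : HPartition N, IndRational (WWPref p) π ↔ IndRational (WPref p) π) ∧
    (∀ (i : N) (S T : Finset N), i ∈ S → i ∈ T →
      WPref p i S {i} → WPref p i T {i} →
      (WWPref p i S T ↔ WPref p i S T)) :=
  ⟨fun _ => forall_congr' fun i => wwPref_iff_wPref_of_acceptable hp (wPref_singleton_self hp i),
    fun _ _ _ _ _ _ hT => wwPref_iff_wPref_of_acceptable hp hT⟩

/-- a partition is individually rational in a WW-hedonic game iff
it is individually rational in the corresponding W-hedonic game; moreover on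
acceptable coalitions the two induced preferences coincide. -/
theorem ww_w_coincide {N : Type*} [DecidableEq N] [Fintype N]
    (p : N → N → N → Prop) (hp : CompletePreorder p) :
    (∀ π : HPartition N, IndRational (WWPref p) π ↔ IndRational (WPref p) π) ∧
    (∀ (i : N) (S T : Finset N), i ∈ S → i ∈ T →
      WPref p i S {i} → WPref p i T {i} →
      (WWPref p i S T ↔ WPref p i S T)) :=
  ww_w_coincide_general p hp
end

section
/- In the roommate game with strict preferences, a matching is core stable if and only if the corresponding partition (into pairs and singletons) is strict core stable in the W-hedonic game with the same underlying preferences, restricted to the fact that in any individually rational W-hedonic partition arising from a stable roommate matching, no weakly blocking coalition of any size exists. -/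
open Finset

/-- with strict preferences, a core stable roommate matching
(a partition into coalitions of size at most two admitting no blocking coalition
of size at most two) admits no weakly blocking coalition of any size in the
W-hedonic game with the same preferences, i.e. it is strict core stable. -/
theorem roommate_strict_core {N : Type*} [DecidableEq N] [Fintype N]
    (p : N → N → N → Prop) (hp : CompletePreorder p)
    (hstrict : ∀ i j k : N, j ≠ k → ¬ (p i j k ∧ p i k j))
    (π : HPartition N) (hsize : ∀ i, (π.part i).card ≤ 2)
    (hcore : ∀ S : Finset N, S.Nonempty → S.card ≤ 2 →
      ¬ ∀ i ∈ S, SPref (WPref p) i S (π.part i)) :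
    ∀ S : Finset N, S.Nonempty →
      ¬ ((∀ i ∈ S, WPref p i S (π.part i)) ∧
          ∃ j ∈ S, SPref (WPref p) j S (π.part j)) := by
  obtain ⟨hcomp, htrans⟩ := hp
  have hrefl : ∀ i j, p i j j := fun i j => (hcomp i j j).elim id id
  -- existence of a minimum in any nonempty finite set
  have hmin : ∀ (i : N) (J : Finset N), J.Nonempty → ∃ m ∈ J, ∀ x ∈ J, p i x m := by
    intro i J hJ
    induction J using Finset.induction_on with
    | empty => exact absurd hJ (by simp)
    | @insert a J ha ih =>
      rcases J.eq_empty_or_nonempty with hJe | hJne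
      · subst hJe
        exact ⟨a, by simp, by simp [hrefl]⟩
      · obtain ⟨m, hm, hmmin⟩ := ih hJne
        rcases hcomp i m a with h | h
        · refine ⟨a, by simp, ?_⟩
          intro x hx
          rcases Finset.mem_insert.mp hx with rfl | hx
          · exact hrefl i x
          · exact htrans i x m a (hmmin x hx) h
        · refine ⟨m, Finset.mem_insert_of_mem hm, ?_⟩
          intro x hx
          rcases Finset.mem_insert.mp hx with rfl | hx
          · exact h
          · exact hmmin x hx
  -- membership in minSet for nonempty sets
  have hminSet_mem : ∀ (i : N) (J : Finset N) (m : N), J ≠ ∅ →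
      (m ∈ minSet p i J ↔ m ∈ J ∧ ∀ x ∈ J, p i x m) := by
    intro i J m hJ
    simp [minSet, hJ]
  -- uniqueness in minSet
  have huniq : ∀ (i : N) (J : Finset N) (s t : N),
      s ∈ minSet p i J → t ∈ minSet p i J → s = t := by
    intro i J s t hs ht
    rcases eq_or_ne J ∅ with hJ | hJ
    · simp [minSet, hJ] at hs ht
      rw [hs, ht]
    · rw [hminSet_mem i J s hJ] at hs
      rw [hminSet_mem i J t hJ] at ht
      by_contra hne
      exact hstrict i s t hne ⟨ht.2 s hs.1, hs.2 t ht.1⟩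
  rintro S hSne ⟨hweak, j, hjS, hjsp⟩
  rcases eq_or_ne (S.erase j) ∅ with hSe | hSe
  · -- S = {j}
    have hSj : S = {j} := by
      rcases (Finset.erase_eq_empty_iff S j).mp hSe with h | h
      · exact absurd h (Finset.nonempty_iff_ne_empty.mp hSne)
      · exact h
    refine hcore S hSne (by rw [hSj]; simp) ?_
    intro i hi
    rw [hSj, Finset.mem_singleton] at hi
    subst hi
    exact hjsp
  · obtain ⟨w, hwmem, hwmin⟩ := hmin j (S.erase j) (Finset.nonempty_iff_ne_empty.mpr hSe)
    have hwj : w ≠ j := (Finset.mem_erase.mp hwmem).1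
    have hwS : w ∈ S := (Finset.mem_erase.mp hwmem).2
    set T : Finset N := {j, w} with hT
    have hTej : T.erase j = {w} := by
      ext x
      simp only [hT, Finset.mem_erase, Finset.mem_insert, Finset.mem_singleton]
      constructor
      · rintro ⟨hx, rfl | rfl⟩
        · exact absurd rfl hx
        · rfl
      · rintro rfl
        exact ⟨hwj, Or.inr rfl⟩
    have hTew : T.erase w = {j} := by
      ext x
      simp only [hT, Finset.mem_erase, Finset.mem_insert, Finset.mem_singleton]
      constructor
      · rintro ⟨hx, rfl | rfl⟩
        · rfl
        · exact absurd rfl hx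
      · rintro rfl
        exact ⟨hwj.symm, Or.inl rfl⟩
    have hsingle : ∀ (i x : N), x ∈ minSet p i ({x} : Finset N) := by
      intro i x
      rw [hminSet_mem i {x} x (by simp)]
      exact ⟨Finset.mem_singleton_self x, by simp [hrefl]⟩
    have hwinS : w ∈ minSet p j (S.erase j) := by
      rw [hminSet_mem j _ w hSe]
      exact ⟨hwmem, hwmin⟩
    -- j strictly prefers T to π.part j
    have hjT : SPref (WPref p) j T (π.part j) := by
      obtain ⟨h1, h2⟩ := hjsp
      constructor
      · intro s hs t ht
        rw [hTej] at hs
        have : s = w := huniq j {w} s w hs (hsingle j w)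
        subst this
        exact h1 s hwinS t ht
      · intro hW
        apply h2
        intro t ht s hs
        have hsw : s = w := huniq j (S.erase j) s w hs hwinS
        rw [hsw]
        exact hW t ht w (by rw [hTej]; exact hsingle j w)
    by_cases hc : SPref (WPref p) w T (π.part w)
    · -- T strictly blocks, contradicting hcore
      refine hcore T ⟨j, by simp [hT]⟩ (by simpa [hT] using Finset.card_insert_le j {w}) ?_
      intro i hi
      rw [hT, Finset.mem_insert, Finset.mem_singleton] at hi
      rcases hi with rfl | rfl
      · exact hjT
      · exact hc
    · -- w is indifferent; derive π.part j = T and contradict j's strict pref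
      have hjSw : j ∈ S.erase w := Finset.mem_erase.mpr ⟨hwj.symm, hjS⟩
      have hwT : WPref p w T (π.part w) := by
        intro s hs t ht
        rw [hTew] at hs
        have hs' : s = j := huniq w {j} s j hs (hsingle w j)
        obtain ⟨m, hm, hmmin⟩ := hmin w (S.erase w) ⟨j, hjSw⟩
        have hmS : m ∈ minSet p w (S.erase w) := by
          rw [hminSet_mem w _ m (Finset.nonempty_iff_ne_empty.mp ⟨j, hjSw⟩)]
          exact ⟨hm, hmmin⟩
        rw [hs']
        exact htrans w j m t (hmmin j hjSw) (hweak w hwS m hmS t ht)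
      have hπT : WPref p w (π.part w) T := by
        by_contra hn
        exact hc ⟨hwT, hn⟩
      have hjmin : j ∈ minSet p w (T.erase w) := by
        rw [hTew]; exact hsingle w j
      rcases eq_or_ne ((π.part w).erase w) ∅ with hpe | hpe
      · have hwmin' : w ∈ minSet p w ((π.part w).erase w) := by
          simp [minSet, hpe]
        have h1 : p w w j := hπT w hwmin' j hjmin
        have h2 : p w j w := hwT j hjmin w hwmin'
        exact hstrict w w j hwj ⟨h1, h2⟩
      · obtain ⟨m, hm, hmmin⟩ := hmin w ((π.part w).erase w)
          (Finset.nonempty_iff_ne_empty.mpr hpe)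
        have hmmem : m ∈ minSet p w ((π.part w).erase w) := by
          rw [hminSet_mem w _ m hpe]
          exact ⟨hm, hmmin⟩
        have h1 : p w m j := hπT m hmmem j hjmin
        have h2 : p w j m := hwT j hjmin m hmmem
        have hmj : m = j := by
          by_contra hne
          exact hstrict w m j hne ⟨h1, h2⟩
        rw [hmj] at hm
        have hjpw : j ∈ π.part w := (Finset.mem_erase.mp hm).2
        have hpeq : π.part j = π.part w := π.eq_of_mem w j hjpw
        have hTpj : T = π.part j := by
          apply Finset.eq_of_subset_of_card_le
          · intro x hx
            rw [hT, Finset.mem_insert, Finset.mem_singleton] at hx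
            rcases hx with rfl | rfl
            · exact π.mem_self x
            · rw [hpeq]; exact π.mem_self x
          · calc (π.part j).card ≤ 2 := hsize j
              _ = T.card := by rw [hT, Finset.card_insert_of_notMem (by simp [hwj.symm]),
                  Finset.card_singleton]
        apply hjsp.2
        intro t ht s hs
        rw [← hTpj, hTej] at ht
        have htw : t = w := huniq j {w} t w ht (hsingle j w)
        have hsw : s = w := huniq j (S.erase j) s w hs hwinS
        rw [htw, hsw]
        exact hrefl j w
end

section
/- For a hedonic game on a finite set N, if a partition π admits a sequence of CIS deviations in which each deviation strictly improves the deviating player and makes no other affected player worse off, and each player's preference relation over coalitions has at most K strict levels, then the sequence has length at most |N|·K; in particular, CIS dynamics always terminate from any starting partition. -/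
open Finset

/-- if every player's preference admits strict chains of length at
most `K`, then any sequence of CIS deviations has length at most `|N| · K`. -/
theorem cis_dynamics_terminate {N : Type*} [DecidableEq N] [Fintype N]
    (pref : N → Finset N → Finset N → Prop)
    (hcomp : ∀ i S T, i ∈ S → i ∈ T → pref i S T ∨ pref i T S)
    (htrans : ∀ i S T U, pref i S T → pref i T U → pref i S U)
    (K : ℕ)
    (hK : ∀ (i : N) (f : ℕ → Finset N) (L : ℕ),
      (∀ t, t < L → SPref pref i (f (t + 1)) (f t)) → L ≤ K)
    (L : ℕ) (π : ℕ → HPartition N)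
    (hstep : ∀ t, t < L → CISDeviation pref (π t) (π (t + 1))) :
    L ≤ Fintype.card N * K := by
  classical
  -- reflexivity of pref on own coalitions
  have hrefl : ∀ (j : N) (S : Finset N), j ∈ S → pref j S S := fun j S h =>
    (hcomp j S S h h).elim id id
  -- every player weakly improves at each step
  have hweak : ∀ t, t < L → ∀ j, pref j ((π (t+1)).part j) ((π t).part j) := by
    intro t ht j
    obtain ⟨i, T, hTco, hTne, hiT, hSP, hTok, hOld, hpart⟩ := hstep t ht
    rw [hpart j]
    by_cases hc : j = i ∨ j ∈ T
    · rw [if_pos hc]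
      rcases hc with rfl | hjT
      · exact hSP.1
      · have hTj : (π t).part j = T := by
          rcases hTco with rfl | ⟨j₀, rfl⟩
          · exact absurd hjT (notMem_empty j)
          · exact (π t).eq_of_mem j₀ j hjT
        rw [hTj]
        exact hTok j hjT
    · rw [if_neg hc]
      push_neg at hc
      obtain ⟨hji, hjT⟩ := hc
      by_cases hij : i ∈ (π t).part j
      · have hij' : (π t).part i = (π t).part j := (π t).eq_of_mem j i hij
        have hjmem : j ∈ (π t).part i := by rw [hij']; exact (π t).mem_self j
        have := hOld j hjmem hji
        rwa [hij'] at this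
      · rw [Finset.erase_eq_of_notMem hij]
        exact hrefl j _ ((π t).mem_self j)
  -- weak improvement chains over time
  have hchain : ∀ (j : N) (a b : ℕ), a ≤ b → b ≤ L →
      pref j ((π b).part j) ((π a).part j) := by
    intro j a b hab hbL
    induction b with
    | zero =>
      have : a = 0 := Nat.le_zero.mp hab
      subst this
      exact hrefl j _ ((π 0).mem_self j)
    | succ b ih =>
      rcases Nat.lt_or_ge a (b+1) with h | h
      · have hb : a ≤ b := Nat.lt_succ_iff.mp h
        exact htrans j _ _ _ (hweak b (Nat.lt_of_succ_le hbL) j)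
          (ih hb (Nat.le_of_succ_le hbL))
      · have : a = b + 1 := le_antisymm hab h
        subst this
        exact hrefl j _ ((π (b+1)).mem_self j)
  -- deviation-time sets
  set D : N → Finset ℕ := fun i =>
    (Finset.range L).filter (fun t => ∃ T, IsCoalitionOf (π t) T ∧ T ≠ (π t).part i ∧ i ∉ T ∧
      SPref pref i (insert i T) ((π t).part i) ∧
      (∀ j ∈ T, pref j (insert i T) T) ∧
      (∀ j ∈ (π t).part i, j ≠ i → pref j (((π t).part i).erase i) ((π t).part i)) ∧
      (∀ k, (π (t+1)).part k = if k = i ∨ k ∈ T then insert i T else ((π t).part k).erase i))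
    with hD
  -- strict improvement for the deviator
  have hstrict : ∀ (i : N) (t : ℕ), t ∈ D i →
      SPref pref i ((π (t+1)).part i) ((π t).part i) := by
    intro i t ht
    rw [hD, Finset.mem_filter] at ht
    obtain ⟨-, T, hTco, hTne, hiT, hSP, hTok, hOld, hpart⟩ := ht
    rw [hpart i, if_pos (Or.inl rfl)]
    exact hSP
  -- strict improvement between a deviation time and any later time
  have hstrict' : ∀ (i : N) (t t' : ℕ), t ∈ D i → t < t' → t' ≤ L →
      SPref pref i ((π t').part i) ((π t).part i) := by
    intro i t t' ht htt' ht'L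
    have htL : t < L := Finset.mem_range.mp (Finset.mem_filter.mp ht).1
    have hs := hstrict i t ht
    have hw : pref i ((π t').part i) ((π (t+1)).part i) :=
      hchain i (t+1) t' htt' ht'L
    constructor
    · exact htrans i _ _ _ hw hs.1
    · intro hcon
      exact hs.2 (htrans i _ _ _ hcon hw)
  -- each player deviates at most K times
  have hcard : ∀ i : N, (D i).card ≤ K := by
    intro i
    set m := (D i).card with hm
    have e := (D i).orderIsoOfFin hm.symm
    set time : ℕ → ℕ := fun s => if h : s < m then (e ⟨s, h⟩ : ℕ) else L with htime
    have hmemD : ∀ s (h : s < m), time s ∈ D i := by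
      intro s h
      simp only [htime, dif_pos h]
      exact (e ⟨s, h⟩).2
    have hlt : ∀ s (h : s < m), time s < time (s+1) ∧ time (s+1) ≤ L := by
      intro s h
      have hsL : time s < L := by
        have := Finset.mem_range.mp (Finset.mem_filter.mp (hmemD s h)).1
        exact this
      by_cases h1 : s + 1 < m
      · constructor
        · simp only [htime, dif_pos h, dif_pos h1]
          exact_mod_cast e.strictMono (by exact Fin.mk_lt_mk.mpr (Nat.lt_succ_self s))
        · have := Finset.mem_range.mp (Finset.mem_filter.mp (hmemD (s+1) h1)).1
          exact le_of_lt this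
      · simp only [htime, dif_neg h1]
        exact ⟨by simpa [htime, dif_pos h] using (by simpa [htime, dif_pos h] using hsL), le_refl L⟩
    refine hK i (fun s => (π (time s)).part i) m ?_
    intro s hs
    obtain ⟨h1, h2⟩ := hlt s hs
    exact hstrict' i (time s) (time (s+1)) (hmemD s hs) h1 h2
  -- every step is a deviation time of some player
  have hcover : Finset.range L ⊆ Finset.univ.biUnion D := by
    intro t ht
    have htL := Finset.mem_range.mp ht
    obtain ⟨i, T, h1, h2, h3, h4, h5, h6, h7⟩ := hstep t htL
    refine Finset.mem_biUnion.mpr ⟨i, Finset.mem_univ i, ?_⟩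
    rw [hD, Finset.mem_filter]
    exact ⟨ht, T, h1, h2, h3, h4, h5, h6, h7⟩
  calc L = (Finset.range L).card := (Finset.card_range L).symm
    _ ≤ (Finset.univ.biUnion D).card := Finset.card_le_card hcover
    _ ≤ ∑ i : N, (D i).card := Finset.card_biUnion_le
    _ ≤ Fintype.card N * K := by
        have := Finset.sum_le_card_nsmul Finset.univ (fun i => (D i).card) K
          (fun i _ => hcard i)
        simpa [Finset.card_univ, smul_eq_mul] using this
end
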